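/- Fix L > 0, c > 4/L^2 and a ∈ (0, 1), and for each N ≥ 2 let δ_1^{(N)}, ..., δ_N^{(N)} be the gaps of the unique equilibrium configuration on [-L, 0] for constant force F = cN. Then N · δ_{⌈aN⌉}^{(N)} → 1/√((1-a)c) as N → ∞; in particular the limiting particle density is not uniform. -/

import Mathlib

/-!
The balance equations give `f k = f N + (N - k) F`. If the leftmost charge sat at `-L` with
`f N ≥ F`, every gap would satisfy `δ k ≤ ((N - k + 1) F)^{-1/2}`, and these bounds sum to at most
`2 √(N / F) < L` once `F > 4 N / L²`, contradicting `∑ δ k = L`. Hence `f N = F` and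
`δ k = ((N - k + 1) F)^{-1/2}` exactly. With `F = c N` this gives
`N δ ⌈a N⌉ = ((N - ⌈a N⌉ + 1) / N · c)^{-1/2} → ((1 - a) c)^{-1/2}`.
-/

/-- An equilibrium (fixed-point) configuration of `N+1` charges
`-L ≤ x N < ... < x 1 < x 0 = 0` on `[-L, 0]` under constant external force `F`:
with gaps `δ k = x (k-1) - x k` and `f k = (δ k)⁻²`, the force balance
`f (k+1) + F = f k` holds for `k = 1, ..., N-1`, and at the left end either
`x N = -L` with `f N ≥ F`, or `x N > -L` with `f N = F`. Such a configuration
exists and is unique. -/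
def IsEquilibConst (N : ℕ) (L F : ℝ) (x : ℕ → ℝ) : Prop :=
  x 0 = 0 ∧ (∀ k < N, x (k + 1) < x k) ∧ -L ≤ x N ∧
  (∀ k, 1 ≤ k → k < N →
    ((x k - x (k + 1)) ^ 2)⁻¹ + F = ((x (k - 1) - x k) ^ 2)⁻¹) ∧
  ((x N = -L ∧ F ≤ ((x (N - 1) - x N) ^ 2)⁻¹) ∨
   (-L < x N ∧ ((x (N - 1) - x N) ^ 2)⁻¹ = F))

open Filter Topology

lemma inv_sqrt_succ_le_two_mul_sub (n : ℝ) (hn : 0 ≤ n) :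
    (√(n + 1))⁻¹ ≤ 2 * (√(n + 1) - √n) := by
  have hpos : 0 < √(n + 1) := Real.sqrt_pos.mpr (by linarith)
  rw [inv_le_iff_one_le_mul₀' hpos]
  nlinarith [Real.sq_sqrt hn, Real.sq_sqrt (by linarith : 0 ≤ n + 1),
    sq_nonneg (√(n + 1) - √n), Real.sqrt_nonneg n]

lemma sum_range_inv_sqrt_sub_le (n : ℕ) :
    ∑ i ∈ Finset.range n, (√((n : ℝ) - i))⁻¹ ≤ 2 * √n := by
  induction n with
  | zero => simp
  | succ n ih =>
    have hshift : ∀ i ∈ Finset.range n,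
        (√(((n + 1 : ℕ) : ℝ) - (i + 1 : ℕ)))⁻¹ = (√((n : ℝ) - i))⁻¹ := by
      intro i _
      push_cast
      ring_nf
    rw [Finset.sum_range_succ', Finset.sum_congr rfl hshift]
    have hstep := inv_sqrt_succ_le_two_mul_sub n n.cast_nonneg
    push_cast
    rw [sub_zero]
    linarith

lemma le_inv_sqrt_of_le_inv_sq {δ m : ℝ} (hδ : 0 < δ) (hm : 0 < m) (h : m ≤ (δ ^ 2)⁻¹) :
    δ ≤ (√m)⁻¹ := by
  calc δ = (√((δ ^ 2)⁻¹))⁻¹ := by rw [Real.sqrt_inv, inv_inv, Real.sqrt_sq hδ.le]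
    _ ≤ (√m)⁻¹ := inv_anti₀ (Real.sqrt_pos.mpr hm) (Real.sqrt_le_sqrt h)

lemma eq_inv_sqrt_of_inv_sq_eq {δ m : ℝ} (hδ : 0 < δ) (h : (δ ^ 2)⁻¹ = m) : δ = (√m)⁻¹ := by
  rw [← h, Real.sqrt_inv, inv_inv, Real.sqrt_sq hδ.le]

namespace IsEquilibConst

variable {N : ℕ} {L F : ℝ} {x : ℕ → ℝ}

lemma gap_pos (h : IsEquilibConst N L F x) {k : ℕ} (hk1 : 1 ≤ k) (hkN : k ≤ N) :
    0 < x (k - 1) - x k := by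
  have := h.2.1 (k - 1) (by omega)
  rw [Nat.sub_add_cancel hk1] at this
  linarith

lemma inv_sq_gap_eq (h : IsEquilibConst N L F x) {k : ℕ} (hk1 : 1 ≤ k) (hkN : k ≤ N) :
    ((x (k - 1) - x k) ^ 2)⁻¹ = ((x (N - 1) - x N) ^ 2)⁻¹ + ((N : ℝ) - k) * F := by
  obtain ⟨j, hj⟩ := Nat.exists_eq_add_of_le hkN
  induction j generalizing k with
  | zero => subst hj; simp
  | succ j ih =>
    have hnext := ih (k := k + 1) (by omega) (by omega) (by omega)
    rw [Nat.add_sub_cancel] at hnext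
    rw [← h.2.2.2.1 k hk1 (by omega), hnext, hj]
    push_cast
    ring

lemma sum_gaps (h : IsEquilibConst N L F x) : ∑ i ∈ Finset.range N, (x i - x (i + 1)) = -x N := by
  rw [Finset.sum_range_sub', h.1, zero_sub]

lemma gap_le_of_le_inv_sq_last_gap (h : IsEquilibConst N L F x) (hF : 0 < F)
    (hlast : F ≤ ((x (N - 1) - x N) ^ 2)⁻¹) {i : ℕ} (hiN : i < N) :
    x i - x (i + 1) ≤ (√((N : ℝ) - i))⁻¹ * (√F)⁻¹ := by
  have hiN' : (i : ℝ) + 1 ≤ N := by exact_mod_cast hiN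
  have hf := h.inv_sq_gap_eq (k := i + 1) (by omega) hiN
  rw [Nat.add_sub_cancel] at hf
  rw [← mul_inv, ← Real.sqrt_mul (by linarith)]
  refine le_inv_sqrt_of_le_inv_sq (sub_pos.mpr (h.2.1 i hiN)) (by nlinarith) ?_
  rw [hf]
  push_cast
  nlinarith

lemma neg_last_le_of_le_inv_sq_last_gap (h : IsEquilibConst N L F x) (hF : 0 < F)
    (hlast : F ≤ ((x (N - 1) - x N) ^ 2)⁻¹) :
    -x N ≤ 2 * √N * (√F)⁻¹ :=
  calc -x N = ∑ i ∈ Finset.range N, (x i - x (i + 1)) := h.sum_gaps.symm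
    _ ≤ ∑ i ∈ Finset.range N, (√((N : ℝ) - i))⁻¹ * (√F)⁻¹ := Finset.sum_le_sum fun i hi =>
        h.gap_le_of_le_inv_sq_last_gap hF hlast (Finset.mem_range.mp hi)
    _ = (∑ i ∈ Finset.range N, (√((N : ℝ) - i))⁻¹) * (√F)⁻¹ := (Finset.sum_mul _ _ _).symm
    _ ≤ 2 * √N * (√F)⁻¹ := by gcongr; exact sum_range_inv_sqrt_sub_le N

lemma inv_sq_last_gap_eq (h : IsEquilibConst N L F x) (hN : 1 ≤ N) (hF : 4 * N / L ^ 2 < F) :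
    ((x (N - 1) - x N) ^ 2)⁻¹ = F := by
  rcases h.2.2.2.2 with ⟨hwall, hlast⟩ | ⟨_, hlast⟩
  · have hF0 : 0 < F := lt_of_le_of_lt (by positivity) hF
    have hL_pos : 0 < L := by
      rw [← neg_neg L, ← hwall, ← h.sum_gaps]
      exact Finset.sum_pos (fun i hi => sub_pos.mpr (h.2.1 i (Finset.mem_range.mp hi)))
        (Finset.nonempty_range_iff.mpr (by omega))
    have hL_le := h.neg_last_le_of_le_inv_sq_last_gap hF0 hlast
    rw [hwall, neg_neg, le_mul_inv_iff₀ (Real.sqrt_pos.mpr hF0)] at hL_le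
    have hsq : L ^ 2 * F ≤ 4 * N := by
      nlinarith [mul_self_le_mul_self (by positivity) hL_le, Real.sq_sqrt hF0.le,
        Real.sq_sqrt (N.cast_nonneg : (0 : ℝ) ≤ N)]
    rw [div_lt_iff₀ (by positivity)] at hF
    linarith
  · exact hlast

theorem gap_eq (h : IsEquilibConst N L F x) (hN : 1 ≤ N) (hF : 4 * N / L ^ 2 < F)
    {k : ℕ} (hk1 : 1 ≤ k) (hkN : k ≤ N) :
    x (k - 1) - x k = (√(((N : ℝ) - k + 1) * F))⁻¹ := by
  refine eq_inv_sqrt_of_inv_sq_eq (h.gap_pos hk1 hkN) ?_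
  rw [h.inv_sq_gap_eq hk1 hkN, h.inv_sq_last_gap_eq hN hF]
  ring

end IsEquilibConst

lemma mul_inv_sqrt_mul_sq {N : ℝ} (hN : 0 < N) (m : ℝ) : N * (√(m * N ^ 2))⁻¹ = (√m)⁻¹ := by
  rw [Real.sqrt_mul' _ (sq_nonneg N), Real.sqrt_sq hN.le, mul_inv, mul_left_comm,
    mul_inv_cancel₀ hN.ne', mul_one]

theorem gap_asymptotics_supercritical_linear_general
    (L c a : ℝ) (hc : 4 / L ^ 2 < c) (ha : a ∈ Set.Ioo (0 : ℝ) 1)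
    (x : ℕ → ℕ → ℝ)
    (hx : ∀ N, 2 ≤ N → IsEquilibConst N L (c * (N : ℝ)) (x N)) :
    Filter.Tendsto
      (fun N : ℕ => (N : ℝ) * (x N (⌈a * (N : ℝ)⌉₊ - 1) - x N ⌈a * (N : ℝ)⌉₊))
      Filter.atTop (nhds (1 / Real.sqrt ((1 - a) * c))) := by
  obtain ⟨ha0, ha1⟩ := ha
  have hc0 : 0 < c := lt_of_le_of_lt (by positivity) hc
  have hceil : Tendsto (fun N : ℕ => (⌈a * N⌉₊ : ℝ) / N) atTop (𝓝 a) :=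
    (tendsto_nat_ceil_mul_div_atTop ha0.le).comp tendsto_natCast_atTop_atTop
  have hratio : Tendsto (fun N : ℕ => (1 - (⌈a * N⌉₊ : ℝ) / N + 1 / N) * c) atTop
      (𝓝 ((1 - a + 0) * c)) :=
    ((tendsto_const_nhds.sub hceil).add tendsto_one_div_atTop_nhds_zero_nat).mul_const c
  have hlim := hratio.sqrt.inv₀ (Real.sqrt_pos.mpr (by nlinarith)).ne'
  rw [add_zero, ← one_div] at hlim
  refine hlim.congr' ?_
  filter_upwards [eventually_ge_atTop 2] with N hN
  have hN0 : (0 : ℝ) < N := by positivity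
  have hk1 : 1 ≤ ⌈a * N⌉₊ := Nat.ceil_pos.mpr (by positivity)
  have hkN : ⌈a * N⌉₊ ≤ N := Nat.ceil_le.mpr (by nlinarith)
  have hF : 4 * (N : ℝ) / L ^ 2 < c * N := by
    rw [mul_div_right_comm]
    exact mul_lt_mul_of_pos_right hc hN0
  rw [(hx N hN).gap_eq (by omega) hF hk1 hkN, ← mul_inv_sqrt_mul_sq hN0]
  congr 3
  field_simp

/-- For `c > 4/L²`, force `F = c N` and `a ∈ (0,1)`, the
gap with index `⌈a N⌉` of the equilibrium configuration satisfies
`N · δ ⌈a N⌉ → 1/√((1-a) c)`; in particular the limiting density is not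
uniform. -/
theorem gap_asymptotics_supercritical_linear
    (L c a : ℝ) (hL : 0 < L) (hc : 4 / L ^ 2 < c) (ha : a ∈ Set.Ioo (0 : ℝ) 1)
    (x : ℕ → ℕ → ℝ)
    (hx : ∀ N, 2 ≤ N → IsEquilibConst N L (c * (N : ℝ)) (x N)) :
    Filter.Tendsto
      (fun N : ℕ => (N : ℝ) * (x N (⌈a * (N : ℝ)⌉₊ - 1) - x N ⌈a * (N : ℝ)⌉₊))
      Filter.atTop (nhds (1 / Real.sqrt ((1 - a) * c))) :=
  gap_asymptotics_supercritical_linear_general L c a hc ha x hx
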